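/- Let λ ∈ ℝ. For all integers n, l ≥ 0 and all y ∈ ℝ, the degenerate Bell polynomials satisfy the Spivey-type relation: φ_{l+n,λ}(y) = Σ_{k=0}^{n} Σ_{m=0}^{l} C(l,m) {n \brace k}_λ (k − nλ)_{l−m,λ} y^k φ_{m,λ}(y). -/

import Mathlib

open Finset

/-- The degenerate falling factorial `(x)_{n,λ} = ∏_{i=0}^{n-1} (x - iλ)`. -/
noncomputable def degFall (lam x : ℝ) (n : ℕ) : ℝ :=
  ∏ i ∈ Finset.range n, (x - (i : ℝ) * lam)

/-- The degenerate Stirling numbers of the second kind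
`{n \brace k}_λ = (1/k!) ∑_{j=0}^{k} (-1)^{k-j} C(k,j) (j)_{n,λ}`. -/
noncomputable def degStirling (lam : ℝ) (n k : ℕ) : ℝ :=
  (1 / (Nat.factorial k : ℝ)) * ∑ j ∈ Finset.range (k + 1),
    (-1 : ℝ) ^ (k - j) * (Nat.choose k j : ℝ) * degFall lam (j : ℝ) n

/-- The degenerate Bell polynomials `φ_{n,λ}(x) = ∑_{k=0}^{n} {n \brace k}_λ x^k`. -/
noncomputable def degBell (lam : ℝ) (n : ℕ) (x : ℝ) : ℝ :=
  ∑ k ∈ Finset.range (n + 1), degStirling lam n k * x ^ k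

/-!
The Newton coefficients `Δʲf(0)/j!` of `f` are its coordinates in the basis of falling
factorials `(x)_j`, so `φ_{n,λ}(y)` is the image of `(x)_{n,λ}` under the umbral functional
`L_y : (x)_j ↦ y^j`.
Since `(x)_k (x-k)_i = (x)_{k+i}`, we have `L_y((x)_k g(x-k)) = y^k L_y(g)`. Now
`(x)_{l+n,λ} = (x)_{n,λ} (x-nλ)_{l,λ}`; expanding the first factor in falling factorials and the
second by the Vandermonde identity for `((x-k) + (k-nλ))_{l,λ}` gives
`(x)_{l+n,λ} = ∑_{k,m} C(l,m) {n \brace k}_λ (k-nλ)_{l-m,λ} (x)_k (x-k)_{m,λ}`,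
and applying `L_y` yields the relation. As `Δʲf(0)` only involves `f(0), …, f(j)`, all these
identities are needed at natural arguments only.
-/

open Polynomial
open scoped Nat

lemma Nat.choose_mul_descFactorial_mul_factorial (k i q : ℕ) :
    (k + i).choose (k + q) * (k + q).descFactorial k * i ! = i.choose q * (k + i)! := by
  have hchoose := Nat.choose_mul (n := k + i) (k := k + q) (Nat.le_add_right k q)
  have hfact := Nat.choose_mul_factorial_mul_factorial (Nat.le_add_right k i)
  simp only [Nat.add_sub_cancel_left] at hchoose hfact
  calc (k + i).choose (k + q) * (k + q).descFactorial k * i !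
      = (k + i).choose (k + q) * (k + q).choose k * k ! * i ! := by
        rw [Nat.descFactorial_eq_factorial_mul_choose]; ring
    _ = i.choose q * ((k + i).choose k * k ! * i !) := by rw [hchoose]; ring
    _ = i.choose q * (k + i)! := by rw [hfact]

section NewtonSeries

variable {R : Type*} [Field R]

noncomputable def newtonCoeff (j : ℕ) : (R → R) →ₗ[R] R where
  toFun f := (fwdDiff (1 : R))^[j] f 0 / (j ! : R)
  map_add' f g := by simp [add_div]
  map_smul' c f := by simp [mul_div_assoc]

lemma newtonCoeff_apply (j : ℕ) (f : R → R) :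
    newtonCoeff j f = (fwdDiff (1 : R))^[j] f 0 / j ! := rfl

lemma newtonCoeff_eq_sum (j : ℕ) (f : R → R) :
    newtonCoeff j f =
      1 / j ! * ∑ p ∈ range (j + 1), (-1) ^ (j - p) * (j.choose p : R) * f p := by
  simp [newtonCoeff_apply, fwdDiff_iter_eq_sum_shift, zsmul_eq_mul, div_eq_inv_mul]

lemma newtonCoeff_congr {f g : R → R} (h : ∀ p : ℕ, f p = g p) (j : ℕ) :
    newtonCoeff j f = newtonCoeff j g := by
  simp only [newtonCoeff_eq_sum, h]

lemma eq_sum_newtonCoeff_mul_descFactorial [CharZero R] (f : R → R) (p : ℕ) :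
    f p = ∑ k ∈ range (p + 1), newtonCoeff k f * p.descFactorial k := by
  have newton := shift_eq_sum_fwdDiff_iter (1 : R) f p 0
  rw [zero_add, nsmul_one] at newton
  refine newton.trans (sum_congr rfl fun k _ => ?_)
  have hk : (k ! : R) ≠ 0 := Nat.cast_ne_zero.2 k.factorial_ne_zero
  rw [newtonCoeff_apply, Nat.descFactorial_eq_factorial_mul_choose, nsmul_eq_mul, Nat.cast_mul,
    div_mul_eq_mul_div, eq_div_iff hk]
  ring

lemma Polynomial.newtonCoeff_eval_eq_zero {P : R[X]} {j : ℕ} (h : P.natDegree < j) :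
    newtonCoeff j P.eval = 0 := by
  simp [newtonCoeff_apply, fwdDiff_iter_eq_zero_of_degree_lt h]

lemma Polynomial.eval_natCast_eq_sum_newtonCoeff [CharZero R] {P : R[X]} {n : ℕ}
    (hP : P.natDegree ≤ n) (p : ℕ) :
    P.eval (p : R) = ∑ k ∈ range (n + 1), newtonCoeff k P.eval * p.descFactorial k := by
  rw [eq_sum_newtonCoeff_mul_descFactorial P.eval p]
  calc _ = ∑ k ∈ range (n + p + 1), newtonCoeff k P.eval * p.descFactorial k :=
        sum_subset (range_subset_range.2 (by omega)) fun k _ hk => by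
          rw [Nat.descFactorial_eq_zero_iff_lt.2 (by simpa using hk), Nat.cast_zero, mul_zero]
    _ = _ := (sum_subset (range_subset_range.2 (by omega)) fun k _ hk => by
          rw [P.newtonCoeff_eval_eq_zero (by simp at hk; omega), zero_mul]).symm

lemma newtonCoeff_descPochhammer_mul_of_lt (g : R → R) {j k : ℕ} (h : j < k) :
    newtonCoeff j (fun x => (descPochhammer R k).eval x * g (x - k)) = 0 := by
  rw [newtonCoeff_eq_sum]
  refine mul_eq_zero_of_right _ (sum_eq_zero fun p hp => ?_)
  rw [descPochhammer_eval_eq_descFactorial,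
    Nat.descFactorial_eq_zero_iff_lt.2 (by simp at hp; omega)]
  simp

lemma newtonCoeff_add_descPochhammer_mul [CharZero R] (g : R → R) (k i : ℕ) :
    newtonCoeff (k + i) (fun x => (descPochhammer R k).eval x * g (x - k)) =
      newtonCoeff i g := by
  simp only [newtonCoeff_eq_sum, descPochhammer_eval_eq_descFactorial]
  rw [show k + i + 1 = k + (i + 1) by ring, sum_range_add, sum_eq_zero fun p hp => by
    rw [Nat.descFactorial_eq_zero_iff_lt.2 (by simpa using hp)]; simp, zero_add, mul_sum, mul_sum]
  refine sum_congr rfl fun q _ => ?_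
  have key : ((k + i).choose (k + q) * (k + q).descFactorial k * i ! : R) =
      i.choose q * (k + i)! := by
    exact_mod_cast Nat.choose_mul_descFactorial_mul_factorial k i q
  rw [Nat.add_sub_add_left, Nat.cast_add, add_sub_cancel_left]
  have hi : (i ! : R) ≠ 0 := Nat.cast_ne_zero.2 i.factorial_ne_zero
  have hki : ((k + i)! : R) ≠ 0 := Nat.cast_ne_zero.2 (k + i).factorial_ne_zero
  field_simp
  linear_combination g q * key

-- `L_y` truncated to the Newton coefficients of index `≤ N`, where it is exact on polynomials of
-- degree `≤ N`.
noncomputable def umbralEval (N : ℕ) (y : R) : (R → R) →ₗ[R] R :=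
  ∑ j ∈ range (N + 1), y ^ j • newtonCoeff j

lemma umbralEval_apply (N : ℕ) (y : R) (f : R → R) :
    umbralEval N y f = ∑ j ∈ range (N + 1), newtonCoeff j f * y ^ j := by
  simp [umbralEval, mul_comm]

lemma umbralEval_congr {f g : R → R} (h : ∀ p : ℕ, f p = g p) (N : ℕ) (y : R) :
    umbralEval N y f = umbralEval N y g := by
  simp only [umbralEval_apply, newtonCoeff_congr h]

lemma umbralEval_descPochhammer_mul [CharZero R] (g : R → R) {k N : ℕ} (h : k ≤ N) (y : R) :
    umbralEval N y (fun x => (descPochhammer R k).eval x * g (x - k)) =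
      y ^ k * umbralEval (N - k) y g := by
  obtain ⟨i, rfl⟩ := Nat.exists_eq_add_of_le h
  rw [umbralEval_apply, umbralEval_apply, Nat.add_sub_cancel_left,
    show k + i + 1 = k + (i + 1) by ring, sum_range_add, sum_eq_zero fun j hj => by
      rw [newtonCoeff_descPochhammer_mul_of_lt _ (by simpa using hj), zero_mul], zero_add, mul_sum]
  refine sum_congr rfl fun j _ => ?_
  rw [newtonCoeff_add_descPochhammer_mul, pow_add]
  ring

lemma Polynomial.umbralEval_eval_of_natDegree_le {P : R[X]} {n N : ℕ} (hP : P.natDegree ≤ n)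
    (hN : n ≤ N) (y : R) : umbralEval N y P.eval = umbralEval n y P.eval := by
  simp only [umbralEval_apply]
  exact (sum_subset (range_subset_range.2 (by omega)) fun k _ hk => by
    rw [P.newtonCoeff_eval_eq_zero (by simp at hk; omega), zero_mul]).symm

end NewtonSeries

section Degenerate

variable (lam : ℝ)

lemma degFall_succ (x : ℝ) (n : ℕ) : degFall lam x (n + 1) = degFall lam x n * (x - n * lam) :=
  prod_range_succ _ _

lemma degFall_add (x : ℝ) (a b : ℕ) :
    degFall lam x (a + b) = degFall lam x a * degFall lam (x - a * lam) b := by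
  simp only [degFall, prod_range_add]
  congr 1
  refine prod_congr rfl fun i _ => ?_
  push_cast
  ring

lemma degFall_add_eq_sum (x y : ℝ) (n : ℕ) :
    degFall lam (x + y) n =
      ∑ m ∈ range (n + 1), (n.choose m : ℝ) * (degFall lam x m * degFall lam y (n - m)) := by
  induction n with
  | zero => simp [degFall]
  | succ n ih =>
    rw [show n + 1 + 1 = n + 2 from rfl,
      sum_choose_succ_mul (fun i j => degFall lam x i * degFall lam y j), ← sum_add_distrib,
      degFall_succ, ih, sum_mul]
    refine sum_congr rfl fun i hi => ?_
    have hi : i ≤ n := Nat.lt_succ_iff.1 (mem_range.1 hi)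
    rw [show n + 1 - i = n - i + 1 by omega, degFall_succ, degFall_succ, Nat.cast_sub hi]
    ring

lemma degFall_eq_eval (x : ℝ) (n : ℕ) :
    degFall lam x n = (∏ i ∈ range n, (X - C ((i : ℝ) * lam))).eval x := by
  simp [degFall, eval_prod]

lemma degStirling_eq_newtonCoeff (n k : ℕ) :
    degStirling lam n k = newtonCoeff k (fun x => degFall lam x n) := by
  rw [newtonCoeff_eq_sum]
  rfl

lemma degBell_eq_umbralEval (n : ℕ) (y : ℝ) :
    degBell lam n y = umbralEval n y (fun x => degFall lam x n) := by
  simp [degBell, umbralEval_apply, degStirling_eq_newtonCoeff]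

lemma umbralEval_degFall {m N : ℕ} (h : m ≤ N) (y : ℝ) :
    umbralEval N y (fun x => degFall lam x m) = degBell lam m y := by
  simp only [degBell_eq_umbralEval, degFall_eq_eval]
  exact umbralEval_eval_of_natDegree_le
    (by rw [natDegree_finsetProd_X_sub_C_eq_card, card_range]) h y

lemma degFall_natCast_eq_sum (p n : ℕ) :
    degFall lam p n =
      ∑ k ∈ range (n + 1), degStirling lam n k * (descPochhammer ℝ k).eval (p : ℝ) := by
  simp only [degFall_eq_eval, degStirling_eq_newtonCoeff, descPochhammer_eval_eq_descFactorial]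
  exact eval_natCast_eq_sum_newtonCoeff
    (by rw [natDegree_finsetProd_X_sub_C_eq_card, card_range]) p

lemma degFall_natCast_add_eq_sum (n l p : ℕ) :
    degFall lam p (l + n) = ∑ k ∈ range (n + 1), ∑ m ∈ range (l + 1),
      l.choose m * degStirling lam n k * degFall lam (k - n * lam) (l - m) *
        ((descPochhammer ℝ k).eval (p : ℝ) * degFall lam (p - k) m) := by
  rw [add_comm l n, degFall_add, degFall_natCast_eq_sum, sum_mul]
  refine sum_congr rfl fun k _ => ?_
  rw [show (p : ℝ) - n * lam = (p - k) + (k - n * lam) by ring, degFall_add_eq_sum, mul_sum]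
  exact sum_congr rfl fun m _ => by ring

end Degenerate

/-- Spivey-type relation for the degenerate Bell polynomials. -/
theorem spivey_degBell (lam : ℝ) (n l : ℕ) (y : ℝ) :
    degBell lam (l + n) y =
      ∑ k ∈ Finset.range (n + 1), ∑ m ∈ Finset.range (l + 1),
        (Nat.choose l m : ℝ) * degStirling lam n k *
          degFall lam ((k : ℝ) - (n : ℝ) * lam) (l - m) * y ^ k * degBell lam m y := by
  have hsplit : ∀ p : ℕ, degFall lam p (l + n) =
      (∑ k ∈ range (n + 1), ∑ m ∈ range (l + 1),
        (l.choose m * degStirling lam n k * degFall lam (k - n * lam) (l - m)) •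
          fun x => (descPochhammer ℝ k).eval x * degFall lam (x - k) m) p := by
    simp [degFall_natCast_add_eq_sum, Finset.sum_apply]
  rw [degBell_eq_umbralEval, umbralEval_congr hsplit]
  simp only [map_sum, map_smul, smul_eq_mul]
  refine sum_congr rfl fun k hk => sum_congr rfl fun m hm => ?_
  rw [mem_range] at hk hm
  rw [umbralEval_descPochhammer_mul (fun x => degFall lam x m) (by omega),
    umbralEval_degFall _ (by omega)]
  ring
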